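/- (Constantin–E–Titi commutator identity.) Let d≥2 and let f, g be locally integrable functions on (0,T)×𝕋^d such that fg is locally integrable. Then for every ε>0 and every (t,x) at which the space-time mollifications are defined, (fg)^ε(t,x) − f^ε(t,x) g^ε(t,x) = ∫_{−ε}^{ε} ∫_{𝕋^d} η_ε(τ,y)[f(t−τ,x−y) − f(t,x)][g(t−τ,x−y) − g(t,x)] dy dτ − (f − f^ε)(t,x)·(g − g^ε)(t,x). -/

import Mathlib

open MeasureTheory ENNReal

noncomputable section

namespace CompressibleEuler

variable {d : ℕ} {E : Type*} [NormedAddCommGroup E]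

/-- Euclidean norm on `Fin d → ℝ`. -/
def euNorm (x : Fin d → ℝ) : ℝ := Real.sqrt (∑ i, x i ^ 2)

/-- The fundamental domain `[0,1)^d` of the torus `𝕋^d = [0,1]^d`. -/
def unitCube (d : ℕ) : Set (Fin d → ℝ) := Set.univ.pi fun _ => Set.Ico (0 : ℝ) 1

/-- Lebesgue measure on the torus `𝕋^d`, realized on the fundamental domain. -/
def cubeVol (d : ℕ) : Measure (Fin d → ℝ) := volume.restrict (unitCube d)

/-- Product measure on `(0,T) × 𝕋^d`. -/
def spaceTime (d : ℕ) (T : ℝ) : Measure (ℝ × (Fin d → ℝ)) :=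
  (volume.restrict (Set.Ioo 0 T)).prod (cubeVol d)

/-- `ℤ^d`-periodicity of a function on `ℝ^d` (i.e. a function on the torus `𝕋^d`). -/
def SpacePeriodic (f : (Fin d → ℝ) → E) : Prop :=
  ∀ (x : Fin d → ℝ) (n : Fin d → ℤ), f (x + fun i => (n i : ℝ)) = f x

/-- The `L^p` norm in time (exponent possibly `∞`) of an `ℝ≥0∞`-valued quantity,
over a time set `s`. -/
def timeLpOn (s : Set ℝ) (p : ℝ≥0∞) (F : ℝ → ℝ≥0∞) : ℝ≥0∞ :=
  if p = ∞ then essSup F (volume.restrict s)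
  else (∫⁻ t in s, F t ^ p.toReal) ^ (1 / p.toReal)

/-- The `L^p(0,T;L^q(𝕋^d))` norm. -/
def LpLqNorm (T : ℝ) (p q : ℝ≥0∞) (u : ℝ → (Fin d → ℝ) → E) : ℝ≥0∞ :=
  timeLpOn (Set.Ioo 0 T) p fun t => eLpNorm (u t) q (cubeVol d)

/-- `u ∈ L^p(0,T;L^q(𝕋^d))`. -/
def MemLpLq (T : ℝ) (p q : ℝ≥0∞) (u : ℝ → (Fin d → ℝ) → E) : Prop :=
  LpLqNorm T p q u < ∞

/-- The homogeneous Besov seminorm `‖·‖_{Ḃ^α_{q,∞}(𝕋^d)}`. -/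
def besovSeminorm (α : ℝ) (q : ℝ≥0∞) (f : (Fin d → ℝ) → E) : ℝ≥0∞ :=
  ⨆ (y : Fin d → ℝ) (_ : y ≠ 0),
    eLpNorm (fun x => f (x - y) - f x) q (cubeVol d) / ENNReal.ofReal (euNorm y ^ α)

/-- The Besov norm of `B^α_{q,∞}(𝕋^d)`. -/
def besovNorm (α : ℝ) (q : ℝ≥0∞) (f : (Fin d → ℝ) → E) : ℝ≥0∞ :=
  eLpNorm f q (cubeVol d) + besovSeminorm α q f

/-- The `L^p(0,T;B^α_{q,∞}(𝕋^d))` norm. -/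
def LpBesovNorm (T : ℝ) (p : ℝ≥0∞) (α : ℝ) (q : ℝ≥0∞) (u : ℝ → (Fin d → ℝ) → E) : ℝ≥0∞ :=
  timeLpOn (Set.Ioo 0 T) p fun t => besovNorm α q (u t)

/-- `u ∈ L^p(0,T;B^α_{q,∞}(𝕋^d))`. -/
def MemLpBesov (T : ℝ) (p : ℝ≥0∞) (α : ℝ) (q : ℝ≥0∞) (u : ℝ → (Fin d → ℝ) → E) : Prop :=
  LpBesovNorm T p α q u < ∞

/-- The norm of the space-time Besov space `B^β_{p,∞}((0,T);B^α_{q,∞}(𝕋^d))`: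
the `L^p(0,T;B^α_{q,∞})` norm plus the time-translation seminorm
`sup_{τ≠0} |τ|^{-β} ‖u(·-τ)-u(·)‖_{L^p(B^α_{q,∞})}`, the inner norm being taken
over the times where both terms are defined. -/
def besovBesovNorm (T β : ℝ) (p : ℝ≥0∞) (α : ℝ) (q : ℝ≥0∞)
    (u : ℝ → (Fin d → ℝ) → E) : ℝ≥0∞ :=
  LpBesovNorm T p α q u
    + ⨆ (τ : ℝ) (_ : τ ≠ 0),
        timeLpOn (Set.Ioo (max 0 τ) (min T (T + τ))) p
            (fun t => besovNorm α q fun x => u (t - τ) x - u t x)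
          / ENNReal.ofReal (|τ| ^ β)

/-- `u ∈ B^β_{p,∞}((0,T);B^α_{q,∞}(𝕋^d))`. -/
def MemBesovBesov (T β : ℝ) (p : ℝ≥0∞) (α : ℝ) (q : ℝ≥0∞)
    (u : ℝ → (Fin d → ℝ) → E) : Prop :=
  besovBesovNorm T β p α q u < ∞

/-- Classical partial derivative in time of a space-time function. -/
def pderivT (φ : ℝ → (Fin d → ℝ) → ℝ) (t : ℝ) (x : Fin d → ℝ) : ℝ :=
  deriv (fun s => φ s x) t

/-- Classical partial derivative in the `i`-th space direction of a space-time function. -/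
def pderivX (i : Fin d) (φ : ℝ → (Fin d → ℝ) → ℝ) (t : ℝ) (x : Fin d → ℝ) : ℝ :=
  fderiv ℝ (φ t) x (Pi.single i 1)

/-- Smooth test functions on `(0,T) × 𝕋^d`, compactly supported away from `t = 0` and
`t = T`, and periodic in space. -/
structure IsTestFunction (T : ℝ) (φ : ℝ → (Fin d → ℝ) → ℝ) : Prop where
  smooth : ContDiff ℝ (⊤ : ℕ∞) (Function.uncurry φ)
  periodic : ∀ t, SpacePeriodic (φ t)
  supp : ∃ a b : ℝ, 0 < a ∧ b < T ∧ ∀ t x, t ∉ Set.Icc a b → φ t x = 0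

/-- Smooth test functions on `[0,T) × 𝕋^d` (allowed to be nonzero at the initial time),
vanishing near `t = T`, and periodic in space. -/
structure IsTestFunctionIC (T : ℝ) (φ : ℝ → (Fin d → ℝ) → ℝ) : Prop where
  smooth : ContDiff ℝ (⊤ : ℕ∞) (Function.uncurry φ)
  periodic : ∀ t, SpacePeriodic (φ t)
  supp : ∃ b : ℝ, b < T ∧ ∀ t x, b ≤ t → φ t x = 0

/-- `g` is the weak time derivative of `f` on `(0,T) × 𝕋^d`. -/
def HasWeakDerivT (T : ℝ) (f g : ℝ → (Fin d → ℝ) → ℝ) : Prop :=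
  ∀ φ : ℝ → (Fin d → ℝ) → ℝ, IsTestFunction T φ →
    ∫ t in Set.Ioo 0 T, ∫ x in unitCube d, f t x * pderivT φ t x
      = - ∫ t in Set.Ioo 0 T, ∫ x in unitCube d, g t x * φ t x

/-- `g` is the weak `i`-th spatial derivative of `f` on `(0,T) × 𝕋^d`. -/
def HasWeakDerivX (T : ℝ) (i : Fin d) (f g : ℝ → (Fin d → ℝ) → ℝ) : Prop :=
  ∀ φ : ℝ → (Fin d → ℝ) → ℝ, IsTestFunction T φ →
    ∫ t in Set.Ioo 0 T, ∫ x in unitCube d, f t x * pderivX i φ t x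
      = - ∫ t in Set.Ioo 0 T, ∫ x in unitCube d, g t x * φ t x

/-- The weak time derivative of `f` belongs to `L^a(0,T;L^b(𝕋^d))`. -/
def DtInLpLq (T : ℝ) (a b : ℝ≥0∞) (f : ℝ → (Fin d → ℝ) → ℝ) : Prop :=
  ∃ g : ℝ → (Fin d → ℝ) → ℝ, HasWeakDerivT T f g ∧ MemLpLq T a b g

/-- The weak spatial gradient of `f` belongs to `L^a(0,T;L^b(𝕋^d))`. -/
def GradInLpLq (T : ℝ) (a b : ℝ≥0∞) (f : ℝ → (Fin d → ℝ) → ℝ) : Prop :=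
  ∃ G : ℝ → (Fin d → ℝ) → Fin d → ℝ,
    (∀ i, HasWeakDerivX T i f fun t x => G t x i) ∧ MemLpLq T a b G

/-- The constant `κ = (γ-1)²/(4γ)` in the pressure law `π(ρ) = κ ρ^γ`. -/
def kappa (γ : ℝ) : ℝ := (γ - 1) ^ 2 / (4 * γ)

/-- The total energy `E(t) = ∫_{𝕋^d} (½ ρ|v|² + κργ/(γ-1)) dx` at time `t`. -/
def energyAt (d : ℕ) (γ : ℝ) (ρ : ℝ → (Fin d → ℝ) → ℝ)
    (v : ℝ → (Fin d → ℝ) → Fin d → ℝ) (t : ℝ) : ℝ :=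
  ∫ x in unitCube d,
    ((1 / 2 : ℝ) * ρ t x * euNorm (v t x) ^ 2 + (kappa γ / (γ - 1)) * ρ t x ^ γ)

/-- The initial energy `E(0)`. -/
def energyInit (d : ℕ) (γ : ℝ) (ρ₀ : (Fin d → ℝ) → ℝ)
    (v₀ : (Fin d → ℝ) → Fin d → ℝ) : ℝ :=
  ∫ x in unitCube d,
    ((1 / 2 : ℝ) * ρ₀ x * euNorm (v₀ x) ^ 2 + (kappa γ / (γ - 1)) * ρ₀ x ^ γ)

/-- A weak solution of the isentropic compressible Euler equations
`∂ₜρ + div(ρv) = 0`, `∂ₜ(ρv) + div(ρv⊗v) + ∇(κρ^γ) = 0` on `(0,T) × 𝕋^d`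
with initial data `ρ(0) = ρ₀`, `(ρv)(0) = ρ₀v₀`:
both equations hold in the sense of distributions, `ρ^γ, ρ|v|² ∈ L^∞(0,T;L¹(𝕋^d))`,
`ρ` is a renormalized solution of the continuity equation, and the energy
inequality `E(t) ≤ E(0)` holds. -/
structure IsWeakSolution (d : ℕ) (T γ : ℝ) (ρ : ℝ → (Fin d → ℝ) → ℝ)
    (v : ℝ → (Fin d → ℝ) → Fin d → ℝ) (ρ₀ : (Fin d → ℝ) → ℝ)
    (v₀ : (Fin d → ℝ) → Fin d → ℝ) : Prop where
  rho_meas : Measurable (Function.uncurry ρ)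
  v_meas : Measurable (Function.uncurry v)
  rho_periodic : ∀ t, SpacePeriodic (ρ t)
  v_periodic : ∀ t, SpacePeriodic (v t)
  rho0_periodic : SpacePeriodic ρ₀
  v0_periodic : SpacePeriodic v₀
  rho_nonneg : ∀ t x, 0 ≤ ρ t x
  rho0_nonneg : ∀ x, 0 ≤ ρ₀ x
  v0_vacuum : ∀ x, ρ₀ x = 0 → v₀ x = 0
  pressure_int : MemLpLq T ∞ 1 fun t x => ρ t x ^ γ
  kinetic_int : MemLpLq T ∞ 1 fun t x => ρ t x * euNorm (v t x) ^ 2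
  mass : ∀ φ : ℝ → (Fin d → ℝ) → ℝ, IsTestFunctionIC T φ →
    (∫ t in Set.Ioo 0 T, ∫ x in unitCube d,
        (ρ t x * pderivT φ t x + ρ t x * (∑ i, v t x i * pderivX i φ t x)))
      + (∫ x in unitCube d, ρ₀ x * φ 0 x) = 0
  momentum : ∀ Φ : ℝ → (Fin d → ℝ) → Fin d → ℝ,
    (∀ j, IsTestFunctionIC T fun s y => Φ s y j) →
    (∫ t in Set.Ioo 0 T, ∫ x in unitCube d,
        ((∑ j, ρ t x * v t x j * pderivT (fun s y => Φ s y j) t x)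
          + (∑ i, ∑ j, ρ t x * v t x i * v t x j * pderivX i (fun s y => Φ s y j) t x)
          + kappa γ * ρ t x ^ γ * (∑ j, pderivX j (fun s y => Φ s y j) t x)))
      + (∫ x in unitCube d, (∑ j, ρ₀ x * v₀ x j * Φ 0 x j)) = 0
  renormalized : ∃ w : ℝ → (Fin d → ℝ) → ℝ,
    (∀ φ : ℝ → (Fin d → ℝ) → ℝ, IsTestFunction T φ →
      ∫ t in Set.Ioo 0 T, ∫ x in unitCube d, (∑ i, v t x i * pderivX i φ t x)
        = - ∫ t in Set.Ioo 0 T, ∫ x in unitCube d, w t x * φ t x) ∧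
    ∀ b : ℝ → ℝ, ContDiff ℝ 1 b → HasCompactSupport (deriv b) →
      ∀ φ : ℝ → (Fin d → ℝ) → ℝ, IsTestFunctionIC T φ →
        (∫ t in Set.Ioo 0 T, ∫ x in unitCube d,
            (b (ρ t x) * pderivT φ t x + b (ρ t x) * (∑ i, v t x i * pderivX i φ t x)
              - (deriv b (ρ t x) * ρ t x - b (ρ t x)) * w t x * φ t x))
          + (∫ x in unitCube d, b (ρ₀ x) * φ 0 x) = 0
  energy_ineq : ∀ᵐ t ∂(volume.restrict (Set.Ioo 0 T)),
    energyAt d γ ρ v t ≤ energyInit d γ ρ₀ v₀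

/-- The exponent `p/(p-3)`, read as `∞` when `p ≤ 3`. -/
def div3Exp (p : ℝ) : ℝ≥0∞ := if p ≤ 3 then ∞ else ENNReal.ofReal (p / (p - 3))

/-- The standard (non-normalized) spatial bump `e^{-1/(1-|x|²)}` for `|x| < 1`. -/
def bump (d : ℕ) (x : Fin d → ℝ) : ℝ :=
  if euNorm x < 1 then Real.exp (-(1 - euNorm x ^ 2)⁻¹) else 0

/-- The normalizing constant `C₀` with `∫ C₀ e^{-1/(1-|x|²)} dx = 1`. -/
def bumpConst (d : ℕ) : ℝ := (∫ x : Fin d → ℝ, bump d x)⁻¹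

/-- The rescaled standard spatial mollifier `η_ε(x) = ε^{-d} η(x/ε)`,
`η(x) = C₀ e^{-1/(1-|x|²)}`. -/
def sKer (d : ℕ) (ε : ℝ) (x : Fin d → ℝ) : ℝ :=
  (ε ^ d)⁻¹ * (bumpConst d * bump d (ε⁻¹ • x))

/-- Mollification in the space variable: `f^ε = f * η_ε`. -/
def sMollify {d : ℕ} {E : Type*} [NormedAddCommGroup E] [NormedSpace ℝ E]
    (ε : ℝ) (f : (Fin d → ℝ) → E) (x : Fin d → ℝ) : E :=
  ∫ y : Fin d → ℝ, sKer d ε (x - y) • f y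

/-- A space-time mollifying kernel: nonnegative, smooth, supported in the unit ball of
`ℝ^{1+d}`, with integral 1. -/
structure IsSTMollifier (d : ℕ) (η : ℝ → (Fin d → ℝ) → ℝ) : Prop where
  smooth : ContDiff ℝ (⊤ : ℕ∞) (Function.uncurry η)
  nonneg : ∀ t x, 0 ≤ η t x
  supp : ∀ t x, 1 ≤ t ^ 2 + euNorm x ^ 2 → η t x = 0
  integral_one : (∫ z : ℝ × (Fin d → ℝ), η z.1 z.2) = 1

/-- The rescaled space-time kernel `η_ε(t,x) = ε^{-(d+1)} η(t/ε, x/ε)`. -/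
def stKer (d : ℕ) (η : ℝ → (Fin d → ℝ) → ℝ) (ε : ℝ) (t : ℝ) (x : Fin d → ℝ) : ℝ :=
  (ε ^ (d + 1))⁻¹ * η (t / ε) (ε⁻¹ • x)

/-- Space-time mollification `f^ε(t,x) = ∫∫ η_ε(t-s, x-y) f(s,y) dy ds`. -/
def stMollify {d : ℕ} {E : Type*} [NormedAddCommGroup E] [NormedSpace ℝ E]
    (η : ℝ → (Fin d → ℝ) → ℝ) (ε : ℝ) (f : ℝ → (Fin d → ℝ) → E)
    (t : ℝ) (x : Fin d → ℝ) : E :=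
  ∫ z : ℝ × (Fin d → ℝ), stKer d η ε (t - z.1) (x - z.2) • f z.1 z.2


/- aux -/
instance (d : ℕ) : MeasureTheory.Measure.IsAddHaarMeasure (volume : Measure (ℝ × (Fin d → ℝ))) :=
  MeasureTheory.Measure.prod.instIsAddHaarMeasure _ _

lemma stKer_eq (d : ℕ) (η : ℝ → (Fin d → ℝ) → ℝ) (ε : ℝ) (z : ℝ × (Fin d → ℝ)) :
    stKer d η ε z.1 z.2 = (ε ^ (d+1))⁻¹ * Function.uncurry η (ε⁻¹ • z) := by
  simp [stKer, Function.uncurry, Prod.smul_def, smul_eq_mul, div_eq_inv_mul]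

lemma stKer_integral {d : ℕ} {η : ℝ → (Fin d → ℝ) → ℝ} (hη : IsSTMollifier d η)
    {ε : ℝ} (hε : 0 < ε) : (∫ z : ℝ × (Fin d → ℝ), stKer d η ε z.1 z.2) = 1 := by
  simp_rw [stKer_eq]
  rw [integral_const_mul,
    MeasureTheory.Measure.integral_comp_smul volume
      (fun z : ℝ × (Fin d → ℝ) => Function.uncurry η z) ε⁻¹]
  have hrank : Module.finrank ℝ (ℝ × (Fin d → ℝ)) = d + 1 := by
    simp [Module.finrank_prod]; ring
  have h1 : (∫ z : ℝ × (Fin d → ℝ), Function.uncurry η z) = 1 := by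
    simpa [Function.uncurry] using hη.integral_one
  rw [hrank, h1, inv_pow, inv_inv, abs_of_pos (pow_pos hε _)]
  simp only [smul_eq_mul, mul_one]
  field_simp

lemma stKer_integrable {d : ℕ} {η : ℝ → (Fin d → ℝ) → ℝ} (hη : IsSTMollifier d η)
    {ε : ℝ} (hε : 0 < ε) (t : ℝ) (x : Fin d → ℝ) :
    MeasureTheory.Integrable
      (fun z : ℝ × (Fin d → ℝ) => stKer d η ε (t - z.1) (x - z.2)) := by
  have hcont : Continuous fun z : ℝ × (Fin d → ℝ) => stKer d η ε (t - z.1) (x - z.2) := by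
    have h1 : Continuous fun z : ℝ × (Fin d → ℝ) =>
        Function.uncurry η ((t - z.1) / ε, ε⁻¹ • (x - z.2)) := by
      apply hη.smooth.continuous.comp
      fun_prop
    simp only [stKer]; exact continuous_const.mul h1
  have hsupp : HasCompactSupport
      fun z : ℝ × (Fin d → ℝ) => stKer d η ε (t - z.1) (x - z.2) := by
    apply HasCompactSupport.intro (isCompact_closedBall (t, x) ε)
    intro z hz
    by_contra hne
    apply hz
    have hηne : η ((t - z.1) / ε) (ε⁻¹ • (x - z.2)) ≠ 0 := by
      intro h0; apply hne; simp [stKer, h0]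
    have hlt : ((t - z.1) / ε) ^ 2 + euNorm (ε⁻¹ • (x - z.2)) ^ 2 < 1 := by
      by_contra hge
      exact hηne (hη.supp _ _ (le_of_not_gt hge))
    have hnn : (0:ℝ) ≤ ∑ i, (ε⁻¹ • (x - z.2)) i ^ 2 :=
      Finset.sum_nonneg fun i _ => sq_nonneg _
    have heu : euNorm (ε⁻¹ • (x - z.2)) ^ 2 = ∑ i, (ε⁻¹ • (x - z.2)) i ^ 2 :=
      Real.sq_sqrt hnn
    rw [heu] at hlt
    have h1 : ((t - z.1) / ε) ^ 2 ≤ 1 :=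
      le_of_add_le_of_nonneg_left hlt.le hnn
    have ht1 : |t - z.1| ≤ ε := by
      have h2 : |(t - z.1) / ε| ≤ 1 := (sq_le_one_iff_abs_le_one _).mp h1
      rw [abs_div, abs_of_pos hε, div_le_one hε] at h2
      exact h2
    have hsum : (∑ i, (ε⁻¹ • (x - z.2)) i ^ 2) ≤ 1 :=
      le_of_add_le_of_nonneg_right hlt.le (sq_nonneg _)
    have hx1 : ∀ i, |x i - z.2 i| ≤ ε := by
      intro i
      have hi : ((ε⁻¹ • (x - z.2)) i) ^ 2 ≤ 1 :=
        le_trans (Finset.single_le_sum (fun j _ => sq_nonneg ((ε⁻¹ • (x - z.2)) j))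
          (Finset.mem_univ i)) hsum
      have h3 : |(ε⁻¹ • (x - z.2)) i| ≤ 1 := (sq_le_one_iff_abs_le_one _).mp hi
      rw [Pi.smul_apply, Pi.sub_apply, smul_eq_mul, abs_mul, abs_inv, abs_of_pos hε] at h3
      have h4 := mul_le_mul_of_nonneg_left h3 hε.le
      rw [← mul_assoc, mul_inv_cancel₀ hε.ne', one_mul, mul_one] at h4
      exact h4
    rw [Metric.mem_closedBall, Prod.dist_eq, max_le_iff]
    constructor
    · rw [Real.dist_eq, abs_sub_comm]; exact ht1
    · rw [dist_pi_le_iff hε.le]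
      intro i
      rw [Real.dist_eq, abs_sub_comm]
      exact hx1 i
  exact hcont.integrable_of_hasCompactSupport hsupp


/-- **Constantin–E–Titi commutator identity**: at every point `(t,x)` at which the
space-time mollifications of `f`, `g` and `fg` are defined (i.e. the corresponding
integrands are integrable),
`(fg)^ε - f^ε g^ε = ∫∫ η_ε(τ,y) [f(t-τ,x-y) - f(t,x)][g(t-τ,x-y) - g(t,x)] dy dτ
  - (f - f^ε)(t,x) · (g - g^ε)(t,x)`. -/
theorem constantin_e_titi_identity
    (d : ℕ) (hd : 2 ≤ d) (T : ℝ) (hT : 0 < T)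
    (η : ℝ → (Fin d → ℝ) → ℝ) (hη : IsSTMollifier d η)
    (f g : ℝ → (Fin d → ℝ) → ℝ)
    (hfm : Measurable (Function.uncurry f)) (hgm : Measurable (Function.uncurry g))
    (hfper : ∀ t, SpacePeriodic (f t)) (hgper : ∀ t, SpacePeriodic (g t))
    (hfloc : ∀ a b : ℝ, 0 < a → b < T →
      MeasureTheory.IntegrableOn (Function.uncurry f) (Set.Icc a b ×ˢ unitCube d))
    (hgloc : ∀ a b : ℝ, 0 < a → b < T →
      MeasureTheory.IntegrableOn (Function.uncurry g) (Set.Icc a b ×ˢ unitCube d))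
    (hfgloc : ∀ a b : ℝ, 0 < a → b < T →
      MeasureTheory.IntegrableOn (fun z => f z.1 z.2 * g z.1 z.2)
        (Set.Icc a b ×ˢ unitCube d))
    (ε : ℝ) (hε : 0 < ε) (t : ℝ) (x : Fin d → ℝ)
    (hf : MeasureTheory.Integrable
      (fun z : ℝ × (Fin d → ℝ) => stKer d η ε (t - z.1) (x - z.2) * f z.1 z.2))
    (hg : MeasureTheory.Integrable
      (fun z : ℝ × (Fin d → ℝ) => stKer d η ε (t - z.1) (x - z.2) * g z.1 z.2))
    (hfg : MeasureTheory.Integrable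
      (fun z : ℝ × (Fin d → ℝ) => stKer d η ε (t - z.1) (x - z.2) * (f z.1 z.2 * g z.1 z.2))) :
    stMollify η ε (fun s y => f s y * g s y) t x
        - stMollify η ε f t x * stMollify η ε g t x
      = (∫ z : ℝ × (Fin d → ℝ), stKer d η ε z.1 z.2
            * ((f (t - z.1) (x - z.2) - f t x) * (g (t - z.1) (x - z.2) - g t x)))
        - (f t x - stMollify η ε f t x) * (g t x - stMollify η ε g t x) := by
  have hAHM : MeasureTheory.Measure.IsAddHaarMeasure (volume : Measure (ℝ × (Fin d → ℝ))) :=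
    inferInstance
  set a := f t x with ha
  set b := g t x with hb
  have hK := stKer_integrable hη hε t x
  -- change of variables for the main integral
  have hI : (∫ z : ℝ × (Fin d → ℝ), stKer d η ε z.1 z.2
        * ((f (t - z.1) (x - z.2) - a) * (g (t - z.1) (x - z.2) - b)))
      = ∫ z : ℝ × (Fin d → ℝ), stKer d η ε (t - z.1) (x - z.2)
        * ((f z.1 z.2 - a) * (g z.1 z.2 - b)) := by
    have := MeasureTheory.integral_sub_left_eq_self
      (fun z : ℝ × (Fin d → ℝ) => stKer d η ε (t - z.1) (x - z.2)
        * ((f z.1 z.2 - a) * (g z.1 z.2 - b))) volume ((t, x) : ℝ × (Fin d → ℝ))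
    rw [← this]
    congr 1
    ext z
    simp [sub_sub_cancel]
  have hexp : (∫ z : ℝ × (Fin d → ℝ), stKer d η ε (t - z.1) (x - z.2)
        * ((f z.1 z.2 - a) * (g z.1 z.2 - b)))
      = (∫ z : ℝ × (Fin d → ℝ), stKer d η ε (t - z.1) (x - z.2) * (f z.1 z.2 * g z.1 z.2))
        - a * (∫ z : ℝ × (Fin d → ℝ), stKer d η ε (t - z.1) (x - z.2) * g z.1 z.2)
        - b * (∫ z : ℝ × (Fin d → ℝ), stKer d η ε (t - z.1) (x - z.2) * f z.1 z.2)
        + a * b * (∫ z : ℝ × (Fin d → ℝ), stKer d η ε (t - z.1) (x - z.2)) := by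
    have e1 : (fun z : ℝ × (Fin d → ℝ) => stKer d η ε (t - z.1) (x - z.2)
          * ((f z.1 z.2 - a) * (g z.1 z.2 - b)))
        = fun z : ℝ × (Fin d → ℝ) =>
          stKer d η ε (t - z.1) (x - z.2) * (f z.1 z.2 * g z.1 z.2)
            - a * (stKer d η ε (t - z.1) (x - z.2) * g z.1 z.2)
            - b * (stKer d η ε (t - z.1) (x - z.2) * f z.1 z.2)
            + a * b * stKer d η ε (t - z.1) (x - z.2) := by
      funext z; ring
    rw [e1, MeasureTheory.integral_add, MeasureTheory.integral_sub, MeasureTheory.integral_sub,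
      integral_const_mul, integral_const_mul, integral_const_mul]
    · exact hfg
    · exact hg.const_mul a
    · exact hfg.sub (hg.const_mul a)
    · exact hf.const_mul b
    · exact (hfg.sub (hg.const_mul a)).sub (hf.const_mul b)
    · exact hK.const_mul (a * b)
  have hone : (∫ z : ℝ × (Fin d → ℝ), stKer d η ε (t - z.1) (x - z.2)) = 1 := by
    have := MeasureTheory.integral_sub_left_eq_self
      (fun z : ℝ × (Fin d → ℝ) => stKer d η ε z.1 z.2) volume ((t, x) : ℝ × (Fin d → ℝ))
    calc (∫ z : ℝ × (Fin d → ℝ), stKer d η ε (t - z.1) (x - z.2))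
        = ∫ z : ℝ × (Fin d → ℝ), stKer d η ε z.1 z.2 := this
      _ = 1 := stKer_integral hη hε
  simp only [stMollify, smul_eq_mul]
  rw [hI, hexp, hone]
  ring


end CompressibleEuler
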